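/- arXiv:2507.10168 — 4 statements merged into one kernel-verified Lean document; each statement's English description precedes it below -/
import Mathlib

section
/- Let S and T be left cancellative monoids and let S × T be their direct product monoid. Then S × T is strongly C*-regular on the boundary if and only if both S and T are strongly C*-regular on the boundary. -/
open scoped Classical

namespace SgC

variable {M : Type*}

/-- Composition of partial maps (`g` after `f`). -/
def pcomp (g f : M → Option M) : M → Option M := fun s => (f s).bind g

/-- The canonical partial inverse of a partial map (the genuine inverse when the map
is injective on its domain, as is the case for all maps in the left inverse hull of a
left cancellative monoid). -/
noncomputable def pinv (f : M → Option M) : M → Option M :=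
  fun t => if h : ∃ s, f s = some t then some h.choose else none

/-- Left translation `t ↦ s * t` as an everywhere-defined partial map. -/
def ptransl [Mul M] (s : M) : M → Option M := fun t => some (s * t)

/-- The identity partial map. -/
def pid : M → Option M := fun s => some s

/-- The block `q⁻¹ ∘ p`: first multiply on the left by `p`, then remove `q` on the left. -/
noncomputable def pblock [Mul M] (p : M × M) : M → Option M :=
  pcomp (pinv (ptransl p.2)) (ptransl p.1)

/-- Membership in the left inverse hull `I_ℓ(M)`: `h` is of the form
`s₂ₙ⁻¹ s₂ₙ₋₁ ⋯ s₂⁻¹ s₁` for some `n ≥ 1` and `sᵢ ∈ M` (the list records the pairs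
`(s₁,s₂), (s₃,s₄), …`, applied left to right). -/
def InInvHull [Mul M] (h : M → Option M) : Prop :=
  ∃ l : List (M × M), l ≠ [] ∧
    h = l.foldl (fun acc p => pcomp (pblock p) acc) pid

/-- Membership in the inverse hull generated by translations by elements of `σ` only
(used for canonical copies of `I_ℓ(S)` inside partial maps of a larger monoid). -/
def InInvHullOn [Mul M] (σ : Set M) (h : M → Option M) : Prop :=
  ∃ l : List (M × M), l ≠ [] ∧ (∀ p ∈ l, p.1 ∈ σ ∧ p.2 ∈ σ) ∧
    h = l.foldl (fun acc p => pcomp (pblock p) acc) pid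

/-- Domain of a partial map. -/
def pdom (h : M → Option M) : Set M := {s | h s ≠ none}

/-- `h` fixes the set `Y` pointwise (in particular `Y ⊆ dom h`). -/
def PFixes (h : M → Option M) (Y : Set M) : Prop := ∀ s ∈ Y, h s = some s

/-- Preimage of a set under a partial map. -/
def ppre (h : M → Option M) (X : Set M) : Set M := {s | ∃ x ∈ X, h s = some x}

/-- Constructible right ideals: domains of elements of the left inverse hull. -/
def IsConstructible [Mul M] (X : Set M) : Prop := ∃ h, InInvHull h ∧ X = pdom h

/-- Membership in `J̄(S)`: sets of the form `X₀` or `X₀ ∖ (X₁ ∪ ⋯ ∪ Xₘ)` with all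
`Xᵢ` constructible. -/
def IsConstructibleBar [Mul M] (X : Set M) : Prop :=
  ∃ (X₀ : Set M) (m : ℕ) (Xi : Fin m → Set M),
    IsConstructible X₀ ∧ (∀ i, IsConstructible (Xi i)) ∧ X = X₀ \ ⋃ i, Xi i

/-- `Xi` is a foundation family for `X`: each `Xi i ⊆ X` and every nonempty
constructible right ideal contained in `X` intersects some `Xi i`. -/
def IsFoundation [Mul M] (X : Set M) {ι : Type*} (Xi : ι → Set M) : Prop :=
  (∀ i, Xi i ⊆ X) ∧
  ∀ Y : Set M, IsConstructible Y → Y.Nonempty → Y ⊆ X → ∃ i, (Y ∩ Xi i).Nonempty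

/-- Strong C*-regularity. -/
def StronglyRegular (M : Type*) [Monoid M] : Prop :=
  ∀ (n : ℕ) (h : Fin n → M → Option M), (∀ k, InInvHull (h k)) →
  ∀ (m : ℕ) (X : Set M) (Xi : Fin m → Set M),
    IsConstructible X → (∀ i, IsConstructible (Xi i)) →
    (X \ ⋃ i, Xi i).Nonempty →
    (X \ ⋃ i, Xi i) ⊆ ⋃ k, {s | h k s = some s} →
    ∃ (l : ℕ) (Y : Fin l → Set M) (kk : Fin l → Fin n),
      (∀ j, IsConstructible (Y j)) ∧
      (X \ ⋃ i, Xi i) ⊆ ⋃ j, Y j ∧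
      ∀ j, PFixes (h (kk j)) (Y j)

/-- C*-regularity. -/
def Regular (M : Type*) [Monoid M] : Prop :=
  ∀ (n : ℕ) (h : Fin n → M → Option M), (∀ k, InInvHull (h k)) →
  ∀ X : Set M, IsConstructibleBar X → X.Nonempty →
    X ⊆ ⋃ k, {s | h k s = some s} →
    ∃ (l : ℕ) (Y : Fin l → Set M) (kk : Fin l → Fin n),
      (∀ j, IsConstructibleBar (Y j)) ∧ X ⊆ ⋃ j, Y j ∧
      ∀ j, PFixes (h (kk j)) (Y j)

/-- Strong C*-regularity on the boundary. -/
def StronglyRegularOnBoundary (M : Type*) [Monoid M] : Prop :=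
  ∀ (n : ℕ) (h : Fin n → M → Option M), (∀ k, InInvHull (h k)) →
  ∀ (m : ℕ) (X : Set M) (Xi : Fin m → Set M),
    IsConstructible X → (∀ i, IsConstructible (Xi i)) → (∀ i, Xi i ⊆ X) →
    (X \ ⋃ i, Xi i).Nonempty →
    (X \ ⋃ i, Xi i) ⊆ ⋃ k, {s | h k s = some s} →
    ∃ (l : ℕ) (Y : Fin l → Set M) (kk : Fin l → Fin n),
      (∀ j, IsConstructible (Y j)) ∧ (∀ j, PFixes (h (kk j)) (Y j)) ∧
      IsFoundation X (Sum.elim Xi Y)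

/-- C*-regularity on the boundary. -/
def RegularOnBoundary (M : Type*) [Monoid M] : Prop :=
  ∀ (n : ℕ) (h : Fin n → M → Option M), (∀ k, InInvHull (h k)) →
  ∀ (m : ℕ) (X : Set M) (Xi : Fin m → Set M),
    IsConstructible X → (∀ i, IsConstructible (Xi i)) → (∀ i, Xi i ⊆ X) →
    (X \ ⋃ i, Xi i).Nonempty →
    (X \ ⋃ i, Xi i) ⊆ ⋃ k, {s | h k s = some s} →
    ∃ (l : ℕ) (Y : Fin l → Set M) (kk : Fin l → Fin n),
      (∀ j, IsConstructibleBar (Y j)) ∧ (∀ j, PFixes (h (kk j)) (Y j)) ∧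
      IsFoundation X (Sum.elim Xi Y)

/-- The type of constructible right ideals `J(M)`. -/
def CIdeal (M : Type*) [Mul M] : Type _ := {X : Set M // IsConstructible X}

/-- The character space `{0,1}^{J(M)}` with the topology of pointwise convergence. -/
abbrev CharSpace (M : Type*) [Mul M] : Type _ := CIdeal M → Bool

/-- The principal character `χ_s`. -/
noncomputable def princhar [Mul M] (s : M) : CharSpace M :=
  fun X => decide (s ∈ X.1)

/-- `Ω(M)`: the closure of the set of principal characters. -/
noncomputable def Omega (M : Type*) [Mul M] : Set (CharSpace M) :=
  closure (Set.range (princhar : M → CharSpace M))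

/-- Filters on `J(M)`: nonempty collections of nonempty constructible ideals closed
under intersections and enlargements within `J(M)`. -/
def IsFilterOn [Mul M] (F : Set (CIdeal M)) : Prop :=
  F.Nonempty ∧ (∀ X ∈ F, (X.1 : Set M).Nonempty) ∧
  (∀ X ∈ F, ∀ Y ∈ F, ∀ Z : CIdeal M, Z.1 = X.1 ∩ Y.1 → Z ∈ F) ∧
  (∀ X ∈ F, ∀ Y : CIdeal M, X.1 ⊆ Y.1 → Y ∈ F)

/-- Nonzero multiplicative `{0,1}`-valued maps on `J(M)`. -/
def IsChar [Mul M] (χ : CharSpace M) : Prop :=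
  (∃ X, χ X = true) ∧
  ∀ X Y Z : CIdeal M, Z.1 = X.1 ∩ Y.1 → χ Z = (χ X && χ Y)

/-- Maximal characters: characters whose associated filter is maximal among filters. -/
def IsMaximalChar [Mul M] (χ : CharSpace M) : Prop :=
  IsChar χ ∧ IsFilterOn {X | χ X = true} ∧
  ∀ G : Set (CIdeal M), IsFilterOn G → {X | χ X = true} ⊆ G → G = {X | χ X = true}

/-- The set of maximal characters `Ω_max(M)`. -/
def OmegaMax (M : Type*) [Mul M] : Set (CharSpace M) := {χ | IsMaximalChar χ}

/-- The boundary `∂Ω(M)`: the closure of the set of maximal characters. -/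
noncomputable def BoundaryOmega (M : Type*) [Mul M] : Set (CharSpace M) :=
  closure (OmegaMax M)

/-!
An element of `I_ℓ(S × T)` is a product `f × g` of elements of `I_ℓ(S)` and `I_ℓ(T)`, so the
constructible right ideals of `S × T` are the rectangles `C × D`. Regularity passes to a factor
by taking products with the other monoid (and swapping the factors).

For the converse write `X = A × B`, `Xᵢ = Aᵢ × Bᵢ`, `hₖ = fₖ × gₖ`, and suppose that no finite
family of rectangles, each fixed pointwise by some `hₖ`, completes the `Xᵢ` to a foundation set
of `X`. Then every such family is missed, together with the `Xᵢ`, by a nonempty constructible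
rectangle in `X`. Ultrafilter limits of maximal filters through these test rectangles are
boundary characters `χ_S`, `χ_T` with `χ_S(A) = χ_T(B) = 1` and `χ_S(C) χ_T(D) = 0` whenever
`C × D` is an `Xᵢ` or a fixed rectangle. Strong regularity of `T`, applied on the fibre over each
`a ∈ A` lying in no `Aᵢ` with `χ_T(Bᵢ) = 1`, shows that `a` is fixed by some `fₖ` for which `gₖ`
fixes an ideal `D` with `χ_T(D) = 1`; strong regularity of `S` then yields a fixed rectangle
`C × D` with `χ_S(C) = χ_T(D) = 1`, a contradiction.
-/

noncomputable def hullWord [Mul M] (l : List (M × M)) : M → Option M :=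
  l.foldl (fun acc p => pcomp (pblock p) acc) pid

theorem pmap_ext {f g : M → Option M} (h : ∀ s t, f s = some t ↔ g s = some t) : f = g :=
  funext fun s => Option.ext (h s)

theorem pcomp_assoc (h g f : M → Option M) : pcomp h (pcomp g f) = pcomp (pcomp h g) f := by
  funext s
  simp only [pcomp, Option.bind_assoc]
  rfl

theorem pcomp_pid (f : M → Option M) : pcomp f pid = f := rfl

theorem pid_pcomp (f : M → Option M) : pcomp pid f = f := by
  funext s
  cases h : f s <;> simp [pcomp, h, pid]

theorem pcomp_eq_some {g f : M → Option M} {s t : M} :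
    pcomp g f s = some t ↔ ∃ u, f s = some u ∧ g u = some t :=
  Option.bind_eq_some_iff

theorem mem_pdom {h : M → Option M} {s : M} : s ∈ pdom h ↔ ∃ t, h s = some t :=
  Option.ne_none_iff_exists'

section Hull

variable [Mul M]

theorem foldl_eq_pcomp_hullWord (l : List (M × M)) (acc : M → Option M) :
    l.foldl (fun acc p => pcomp (pblock p) acc) acc = pcomp (hullWord l) acc := by
  induction l generalizing acc with
  | nil => exact (pid_pcomp acc).symm
  | cons p l ih =>
    show l.foldl _ (pcomp (pblock p) acc) = pcomp (l.foldl _ (pcomp (pblock p) pid)) acc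
    rw [ih, ih, pcomp_pid, pcomp_assoc]

theorem hullWord_nil : hullWord ([] : List (M × M)) = pid := rfl

theorem hullWord_append (l₁ l₂ : List (M × M)) :
    hullWord (l₁ ++ l₂) = pcomp (hullWord l₂) (hullWord l₁) := by
  rw [hullWord, List.foldl_append, foldl_eq_pcomp_hullWord]
  rfl

theorem hullWord_cons (p : M × M) (l : List (M × M)) :
    hullWord (p :: l) = pcomp (hullWord l) (pblock p) := by
  rw [hullWord, List.foldl_cons, foldl_eq_pcomp_hullWord, pcomp_pid]

theorem hullWord_singleton (p : M × M) : hullWord [p] = pblock p := by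
  rw [hullWord_cons, hullWord_nil, pid_pcomp]

theorem InInvHull.comp {g f : M → Option M} (hg : InInvHull g) (hf : InInvHull f) :
    InInvHull (pcomp g f) := by
  obtain ⟨lg, hlg, rfl⟩ := hg
  obtain ⟨lf, -, rfl⟩ := hf
  exact ⟨lf ++ lg, by simp [hlg], (hullWord_append lf lg).symm⟩

end Hull

section Cancel

variable [Monoid M] [IsLeftCancelMul M]

theorem pblock_eq_some {p : M × M} {a c : M} : pblock p a = some c ↔ p.2 * c = p.1 * a := by
  simp only [pblock, pcomp, ptransl, Option.bind_some, pinv, Option.some_inj]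
  split_ifs with h
  · rw [Option.some_inj]
    exact ⟨fun hc => hc ▸ h.choose_spec,
      fun hc => mul_left_cancel (h.choose_spec.trans hc.symm)⟩
  · simp only [false_iff]
    exact fun hc => h ⟨c, hc⟩

theorem pblock_one : pblock ((1 : M), (1 : M)) = pid :=
  pmap_ext fun a c => by rw [pblock_eq_some]; simp [pid, eq_comm]

theorem hullWord_replicate_one (n : ℕ) :
    hullWord (List.replicate n ((1 : M), (1 : M))) = pid := by
  induction n with
  | zero => rfl
  | succ n ih => rw [List.replicate_succ, hullWord_cons, ih, pblock_one, pid_pcomp]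

theorem hullWord_eq_some_iff_reverse (l : List (M × M)) (s t : M) :
    hullWord l s = some t ↔ hullWord (l.map Prod.swap).reverse t = some s := by
  induction l generalizing s t with
  | nil => simp [hullWord_nil, pid, eq_comm]
  | cons p l ih =>
    rw [hullWord_cons, List.map_cons, List.reverse_cons, hullWord_append, hullWord_singleton,
      pcomp_eq_some, pcomp_eq_some]
    refine exists_congr fun u => ?_
    rw [ih, pblock_eq_some, pblock_eq_some, Prod.fst_swap, Prod.snd_swap, eq_comm, and_comm]

theorem inInvHull_pid : InInvHull (pid : M → Option M) :=
  ⟨[(1, 1)], List.cons_ne_nil _ _, by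
    show pid = hullWord [(1, 1)]
    rw [hullWord_singleton, pblock_one]⟩

theorem isConstructible_univ : IsConstructible (Set.univ : Set M) :=
  ⟨pid, inInvHull_pid, by ext; simp [pdom, pid]⟩

/-- Composing a word with its reverse gives the partial identity on its domain. -/
theorem IsConstructible.exists_partialId {X : Set M} (hX : IsConstructible X) :
    ∃ e, InInvHull e ∧ ∀ s t, e s = some t ↔ s ∈ X ∧ t = s := by
  obtain ⟨_, ⟨l, hl, rfl⟩, rfl⟩ := hX
  refine ⟨hullWord (l ++ (l.map Prod.swap).reverse), ⟨_, by simp [hl], rfl⟩, fun s t => ?_⟩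
  rw [hullWord_append, pcomp_eq_some, mem_pdom]
  constructor
  · rintro ⟨u, hu, hut⟩
    have hback := (hullWord_eq_some_iff_reverse l s u).1 hu
    exact ⟨⟨u, hu⟩, Option.some_inj.1 (hut.symm.trans hback)⟩
  · rintro ⟨⟨u, hu⟩, rfl⟩
    exact ⟨u, hu, (hullWord_eq_some_iff_reverse l _ u).1 hu⟩

theorem IsConstructible.inter {X Y : Set M} (hX : IsConstructible X) (hY : IsConstructible Y) :
    IsConstructible (X ∩ Y) := by
  obtain ⟨e, he, hes⟩ := hX.exists_partialId
  obtain ⟨g, hg, rfl⟩ := hY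
  refine ⟨pcomp g e, hg.comp he, Set.ext fun s => ?_⟩
  simp [mem_pdom, pcomp_eq_some, hes]

end Cancel

section Product

variable {S T : Type*}

def pprod (f : S → Option S) (g : T → Option T) : S × T → Option (S × T) :=
  fun x => Option.map₂ Prod.mk (f x.1) (g x.2)

theorem pprod_eq_some {f : S → Option S} {g : T → Option T} {x y : S × T} :
    pprod f g x = some y ↔ f x.1 = some y.1 ∧ g x.2 = some y.2 := by
  cases hf : f x.1 <;> cases hg : g x.2 <;> simp [pprod, hf, hg, Prod.ext_iff]

theorem pprod_pid : pprod (pid : S → Option S) (pid : T → Option T) = pid :=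
  pmap_ext fun x y => by rw [pprod_eq_some]; simp [pid, Prod.ext_iff]

theorem pcomp_pprod (f f' : S → Option S) (g g' : T → Option T) :
    pcomp (pprod f g) (pprod f' g') = pprod (pcomp f f') (pcomp g g') :=
  pmap_ext fun x y => by
    simp only [pcomp_eq_some, pprod_eq_some, Prod.exists]
    exact ⟨fun ⟨a, b, ⟨ha, hb⟩, hya, hyb⟩ => ⟨⟨a, ha, hya⟩, ⟨b, hb, hyb⟩⟩,
      fun ⟨⟨a, ha, hya⟩, ⟨b, hb, hyb⟩⟩ => ⟨a, b, ⟨ha, hb⟩, hya, hyb⟩⟩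

theorem pdom_pprod (f : S → Option S) (g : T → Option T) :
    pdom (pprod f g) = pdom f ×ˢ pdom g := by
  ext x
  simp only [mem_pdom, Set.mem_prod, pprod_eq_some, Prod.exists]
  exact ⟨fun ⟨a, b, ha, hb⟩ => ⟨⟨a, ha⟩, ⟨b, hb⟩⟩,
    fun ⟨⟨a, ha⟩, ⟨b, hb⟩⟩ => ⟨a, b, ha, hb⟩⟩

theorem PFixes.prod {f : S → Option S} {g : T → Option T} {C : Set S} {D : Set T}
    (hf : PFixes f C) (hg : PFixes g D) : PFixes (pprod f g) (C ×ˢ D) :=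
  fun x hx => pprod_eq_some.2 ⟨hf x.1 hx.1, hg x.2 hx.2⟩

theorem PFixes.of_pprod_left {f : S → Option S} {g : T → Option T} {C : Set S} {D : Set T}
    (h : PFixes (pprod f g) (C ×ˢ D)) (hD : D.Nonempty) : PFixes f C := fun a ha =>
  (pprod_eq_some.1 (h (a, hD.some) ⟨ha, hD.some_mem⟩)).1

variable [Monoid S] [Monoid T] [IsLeftCancelMul S] [IsLeftCancelMul T]

theorem pblock_prod (p : (S × T) × (S × T)) :
    pblock p = pprod (pblock (p.1.1, p.2.1)) (pblock (p.1.2, p.2.2)) :=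
  pmap_ext fun x y => by simp only [pblock_eq_some, pprod_eq_some, Prod.ext_iff, Prod.fst_mul,
    Prod.snd_mul]

theorem hullWord_prod (l : List ((S × T) × (S × T))) :
    hullWord l = pprod (hullWord (l.map fun p => (p.1.1, p.2.1)))
      (hullWord (l.map fun p => (p.1.2, p.2.2))) := by
  induction l with
  | nil => exact pprod_pid.symm
  | cons p l ih => simp only [List.map_cons, hullWord_cons, ih, pblock_prod p, pcomp_pprod]

theorem InInvHull.exists_pprod {h : S × T → Option (S × T)} (hh : InInvHull h) :
    ∃ f g, InInvHull f ∧ InInvHull g ∧ h = pprod f g := by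
  obtain ⟨l, hl, rfl⟩ := hh
  exact ⟨_, _, ⟨_, by simpa using hl, rfl⟩, ⟨_, by simpa using hl, rfl⟩,
    hullWord_prod l⟩

theorem InInvHull.prod {f : S → Option S} {g : T → Option T} (hf : InInvHull f)
    (hg : InInvHull g) : InInvHull (pprod f g) := by
  obtain ⟨lf, hlf, rfl⟩ := hf
  obtain ⟨lg, hlg, rfl⟩ := hg
  show InInvHull (pprod (hullWord lf) (hullWord lg))
  have hleft : pprod (hullWord lf) (pid : T → Option T) =
      hullWord (lf.map fun p => ((p.1, 1), (p.2, 1))) := by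
    simp [hullWord_prod, Function.comp_def, hullWord_replicate_one]
  have hright : pprod (pid : S → Option S) (hullWord lg) =
      hullWord (lg.map fun p => ((1, p.1), (1, p.2))) := by
    simp [hullWord_prod, Function.comp_def, hullWord_replicate_one]
  have hsplit : pprod (hullWord lf) (hullWord lg) =
      pcomp (pprod (hullWord lf) pid) (pprod pid (hullWord lg)) := by
    rw [pcomp_pprod, pcomp_pid, pid_pcomp]
  rw [hsplit, hleft, hright]
  exact InInvHull.comp ⟨_, by simpa using hlf, rfl⟩ ⟨_, by simpa using hlg, rfl⟩

theorem IsConstructible.prod {C : Set S} {D : Set T} (hC : IsConstructible C)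
    (hD : IsConstructible D) : IsConstructible (C ×ˢ D) := by
  obtain ⟨f, hf, rfl⟩ := hC
  obtain ⟨g, hg, rfl⟩ := hD
  exact ⟨pprod f g, hf.prod hg, (pdom_pprod f g).symm⟩

theorem IsConstructible.exists_prod {X : Set (S × T)} (hX : IsConstructible X) :
    ∃ C D, IsConstructible C ∧ IsConstructible D ∧ X = C ×ˢ D := by
  obtain ⟨h, hh, rfl⟩ := hX
  obtain ⟨f, g, hf, hg, rfl⟩ := hh.exists_pprod
  exact ⟨pdom f, pdom g, ⟨f, hf, rfl⟩, ⟨g, hg, rfl⟩, pdom_pprod f g⟩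

end Product

section MulEquiv

variable {N : Type*} [Monoid M] [Monoid N]

def pconj (e : M ≃* N) (h : M → Option M) : N → Option N := fun y => (h (e.symm y)).map e

theorem pconj_eq_some {e : M ≃* N} {h : M → Option M} {y z : N} :
    pconj e h y = some z ↔ h (e.symm y) = some (e.symm z) := by
  simp only [pconj, Option.map_eq_some_iff]
  exact ⟨fun ⟨a, ha, hz⟩ => hz ▸ by simpa using ha,
    fun hz => ⟨_, hz, e.apply_symm_apply z⟩⟩

theorem pconj_pcomp (e : M ≃* N) (g f : M → Option M) :
    pconj e (pcomp g f) = pcomp (pconj e g) (pconj e f) :=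
  pmap_ext fun y z => by
    simp only [pconj_eq_some, pcomp_eq_some]
    exact ⟨fun ⟨u, hu, hz⟩ => ⟨e u, by simpa using hu, by simpa using hz⟩,
      fun ⟨v, hv, hz⟩ => ⟨e.symm v, hv, hz⟩⟩

variable [IsLeftCancelMul M] [IsLeftCancelMul N]

theorem pconj_pblock (e : M ≃* N) (p : M × M) : pconj e (pblock p) = pblock (e p.1, e p.2) :=
  pmap_ext fun y z => by
    rw [pconj_eq_some, pblock_eq_some, pblock_eq_some, ← e.symm.injective.eq_iff]
    simp

theorem pconj_hullWord (e : M ≃* N) (l : List (M × M)) :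
    pconj e (hullWord l) = hullWord (l.map fun p => (e p.1, e p.2)) := by
  induction l with
  | nil => exact pmap_ext fun y z => by simp [pconj_eq_some, hullWord_nil, pid]
  | cons p l ih => rw [hullWord_cons, pconj_pcomp, ih, pconj_pblock, List.map_cons, hullWord_cons]

theorem InInvHull.pconj (e : M ≃* N) {h : M → Option M} (hh : InInvHull h) :
    InInvHull (pconj e h) := by
  obtain ⟨l, hl, rfl⟩ := hh
  exact ⟨_, by simpa using hl, pconj_hullWord e l⟩

theorem IsConstructible.preimage (e : N ≃* M) {X : Set M} (hX : IsConstructible X) :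
    IsConstructible (e ⁻¹' X) := by
  obtain ⟨h, hh, rfl⟩ := hX
  refine ⟨pconj e.symm h, hh.pconj e.symm, Set.ext fun y => ?_⟩
  simp only [Set.mem_preimage, mem_pdom, pconj_eq_some, MulEquiv.symm_symm]
  exact e.surjective.exists

theorem IsFoundation.preimage (e : N ≃* M) {X : Set M} {ι : Type*} {Xi : ι → Set M}
    (h : IsFoundation X Xi) : IsFoundation (e ⁻¹' X) fun i => e ⁻¹' Xi i := by
  refine ⟨fun i => Set.preimage_mono (h.1 i), fun Z hZ hZne hZX => ?_⟩
  obtain ⟨i, x, hxZ, hxi⟩ := h.2 (e.symm ⁻¹' Z) (hZ.preimage e.symm)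
    (hZne.preimage e.symm.surjective) fun x hx => by simpa using hZX hx
  exact ⟨i, e.symm x, hxZ, by simpa using hxi⟩

theorem StronglyRegularOnBoundary.of_mulEquiv (hM : StronglyRegularOnBoundary M) (e : M ≃* N) :
    StronglyRegularOnBoundary N := by
  intro n h hh m X Xi hX hXi hsub hne hcov
  have hfix : ∀ k x, pconj e.symm (h k) x = some x ↔ h k (e x) = some (e x) := fun k x => by
    simp [pconj_eq_some]
  obtain ⟨l, Y, kk, hY, hYfix, hfnd⟩ := hM n (fun k => pconj e.symm (h k))
    (fun k => (hh k).pconj e.symm) m (e ⁻¹' X) (fun i => e ⁻¹' Xi i) (hX.preimage e)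
    (fun i => (hXi i).preimage e) (fun i => Set.preimage_mono (hsub i))
    (by simpa [← Set.preimage_iUnion] using hne.preimage e.surjective)
    (fun x hx => by simpa [hfix] using hcov (by simpa using hx))
  refine ⟨l, fun j => e.symm ⁻¹' Y j, kk, fun j => (hY j).preimage e.symm,
    fun j y hy => by simpa [hfix] using hYfix j _ hy, ?_⟩
  convert hfnd.preimage e.symm using 1
  · simp [Set.preimage_preimage]
  · ext (i | j) <;> simp [Set.preimage_preimage]

end MulEquiv

section Foundation

variable [Mul M] {X : Set M}

theorem isFoundation_of_subset_iUnion {ι : Type*} {Xi : ι → Set M} (hsub : ∀ i, Xi i ⊆ X)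
    (hcov : X ⊆ ⋃ i, Xi i) : IsFoundation X Xi := by
  refine ⟨hsub, fun Y _ ⟨y, hy⟩ hYX => ?_⟩
  obtain ⟨i, hi⟩ := Set.mem_iUnion.1 (hcov (hYX hy))
  exact ⟨i, y, hy, hi⟩

theorem IsFoundation.comp_surjective {ι ι' : Type*} {Xi : ι → Set M} (h : IsFoundation X Xi)
    {σ : ι' → ι} (hσ : Function.Surjective σ) : IsFoundation X (Xi ∘ σ) := by
  refine ⟨fun j => h.1 (σ j), fun Y hY hYne hYX => ?_⟩
  obtain ⟨i, hi⟩ := h.2 Y hY hYne hYX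
  obtain ⟨j, rfl⟩ := hσ i
  exact ⟨j, hi⟩

def IsFixedSubideal (h : M → Option M) (X C : Set M) : Prop :=
  IsConstructible C ∧ C ⊆ X ∧ PFixes h C

/-- The conclusion of `StronglyRegularOnBoundary`. -/
def HasFixedFoundation {κ ι : Type*} (f : κ → M → Option M) (X : Set M) (Xi : ι → Set M) :
    Prop :=
  ∃ (l : ℕ) (Y : Fin l → Set M) (kk : Fin l → κ),
    (∀ j, IsConstructible (Y j)) ∧ (∀ j, PFixes (f (kk j)) (Y j)) ∧
      IsFoundation X (Sum.elim Xi Y)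

theorem HasFixedFoundation.of_finite {κ ι ν : Type*} [Finite ν] {f : κ → M → Option M}
    {Xi : ι → Set M} (Y : ν → Set M) (kk : ν → κ) (hY : ∀ j, IsConstructible (Y j))
    (hfix : ∀ j, PFixes (f (kk j)) (Y j)) (hfnd : IsFoundation X (Sum.elim Xi Y)) :
    HasFixedFoundation f X Xi := by
  obtain ⟨l, ⟨e⟩⟩ := Finite.exists_equiv_fin ν
  refine ⟨l, Y ∘ e.symm, kk ∘ e.symm, fun j => hY _, fun j => hfix _, ?_⟩
  rw [← Function.comp_id Xi, ← Sum.elim_comp_map]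
  exact hfnd.comp_surjective (Sum.map_surjective.2 ⟨Function.surjective_id, e.symm.surjective⟩)

/-- The sets of constructible ideals on which characters of the boundary `∂Ω(M)` take the
value `1` have this property. -/
def RespectsFoundations (χ : Set M → Prop) : Prop :=
  ∀ ⦃X : Set M⦄ ⦃ι : Type⦄ [Finite ι] (Xi : ι → Set M),
    χ X → (∀ i, IsConstructible (Xi i)) → IsFoundation X Xi → ∃ i, χ (Xi i)

theorem RespectsFoundations.nonempty {χ : Set M → Prop} (hχ : RespectsFoundations χ)
    {C : Set M} (hC : χ C) : C.Nonempty := by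
  by_contra hempty
  obtain ⟨i, -⟩ := hχ (Empty.elim : Empty → Set M) hC (fun i => i.elim)
    ⟨fun i => i.elim, fun Y _ hYne hYC => absurd (hYne.mono hYC) hempty⟩
  exact i.elim

end Foundation

theorem StronglyRegularOnBoundary.exists_isFixedSubideal [Monoid M]
    (hM : StronglyRegularOnBoundary M)
    {χ : Set M → Prop} (hχ : RespectsFoundations χ) {ι κ : Type} [Finite ι] [Finite κ]
    {f : κ → M → Option M} (hf : ∀ k, InInvHull (f k)) {X : Set M} {Xi : ι → Set M}
    (hX : IsConstructible X) (hXi : ∀ i, IsConstructible (Xi i)) (hsub : ∀ i, Xi i ⊆ X)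
    (hcov : X \ ⋃ i, Xi i ⊆ ⋃ k, {s | f k s = some s}) (hχX : χ X) :
    (∃ i, χ (Xi i)) ∨ ∃ k C, IsFixedSubideal (f k) X C ∧ χ C := by
  rcases (X \ ⋃ i, Xi i).eq_empty_or_nonempty with hempty | hne
  · exact .inl (hχ Xi hχX hXi (isFoundation_of_subset_iUnion hsub (Set.sdiff_eq_empty.1 hempty)))
  obtain ⟨m, ⟨eι⟩⟩ := Finite.exists_equiv_fin ι
  obtain ⟨n, ⟨eκ⟩⟩ := Finite.exists_equiv_fin κ
  have hιU : ⋃ i, Xi (eι.symm i) = ⋃ i, Xi i := eι.symm.surjective.iUnion_comp Xi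
  have hκU : ⋃ k, {s | f (eκ.symm k) s = some s} = ⋃ k, {s | f k s = some s} :=
    eκ.symm.surjective.iUnion_comp fun k => {s | f k s = some s}
  obtain ⟨l, Y, kk, hY, hYfix, hfnd⟩ := hM n (fun k => f (eκ.symm k)) (fun k => hf _) m X
    (fun i => Xi (eι.symm i)) hX (fun i => hXi _) (fun i => hsub _) (by rwa [hιU])
    (by rwa [hιU, hκU])
  obtain ⟨i | j, hi⟩ := hχ _ hχX (Sum.forall.2 ⟨fun i => hXi _, hY⟩) hfnd
  · exact .inl ⟨_, hi⟩
  · exact .inr ⟨_, _, ⟨hY j, hfnd.1 (.inr j), hYfix j⟩, hi⟩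

section Filters

variable [Mul M]

/-- `IsFilterOn`, for collections of sets rather than of elements of `CIdeal M`. -/
structure IsConstrFilter (F : Set (Set M)) : Prop where
  nonempty : F.Nonempty
  isConstructible : ∀ C ∈ F, IsConstructible C
  nonempty_of_mem : ∀ C ∈ F, C.Nonempty
  mem_of_superset : ∀ C ∈ F, ∀ D, IsConstructible D → C ⊆ D → D ∈ F
  inter_mem : ∀ C ∈ F, ∀ D ∈ F, C ∩ D ∈ F

theorem isConstrFilter_sUnion {c : Set (Set (Set M))} (hc : ∀ F ∈ c, IsConstrFilter F)
    (hchain : IsChain (· ⊆ ·) c) (hne : c.Nonempty) : IsConstrFilter (⋃₀ c) where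
  nonempty := by
    obtain ⟨F, hF⟩ := hne
    obtain ⟨C, hC⟩ := (hc F hF).nonempty
    exact ⟨C, F, hF, hC⟩
  isConstructible := fun _ ⟨F, hF, hCF⟩ => (hc F hF).isConstructible _ hCF
  nonempty_of_mem := fun _ ⟨F, hF, hCF⟩ => (hc F hF).nonempty_of_mem _ hCF
  mem_of_superset := fun _ ⟨F, hF, hCF⟩ D hD hCD =>
    ⟨F, hF, (hc F hF).mem_of_superset _ hCF D hD hCD⟩
  inter_mem := by
    rintro C ⟨F, hF, hCF⟩ D ⟨G, hG, hDG⟩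
    rcases hchain.total hF hG with hFG | hGF
    · exact ⟨G, hG, (hc G hG).inter_mem _ (hFG hCF) _ hDG⟩
    · exact ⟨F, hF, (hc F hF).inter_mem _ hCF _ (hGF hDG)⟩

def IsMaxConstrFilter (F : Set (Set M)) : Prop := Maximal IsConstrFilter F

end Filters

section MaximalFilters

variable [Monoid M] [IsLeftCancelMul M]

theorem exists_maximal_isConstrFilter {C : Set M} (hC : IsConstructible C) (hne : C.Nonempty) :
    ∃ F, IsMaxConstrFilter F ∧ C ∈ F := by
  have hprincipal : IsConstrFilter {D | IsConstructible D ∧ C ⊆ D} :=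
    { nonempty := ⟨C, hC, subset_rfl⟩
      isConstructible := fun _ hD => hD.1
      nonempty_of_mem := fun _ hD => hne.mono hD.2
      mem_of_superset := fun _ hD E hE hDE => ⟨hE, hD.2.trans hDE⟩
      inter_mem := fun _ hD _ hE => ⟨hD.1.inter hE.1, Set.subset_inter hD.2 hE.2⟩ }
  obtain ⟨F, hsub, hF⟩ := zorn_subset_nonempty {F | IsConstrFilter F}
    (fun c hc hchain hne => ⟨⋃₀ c, isConstrFilter_sUnion hc hchain hne,
      fun _ => Set.subset_sUnion_of_mem⟩) _ hprincipal
  exact ⟨F, hF, hsub ⟨hC, subset_rfl⟩⟩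

theorem IsMaxConstrFilter.mem_of_forall_inter_nonempty {F : Set (Set M)} (hF : IsMaxConstrFilter F)
    {D : Set M} (hD : IsConstructible D) (hmeet : ∀ C ∈ F, (C ∩ D).Nonempty) : D ∈ F := by
  have hG : IsConstrFilter {Z | IsConstructible Z ∧ ∃ C ∈ F, C ∩ D ⊆ Z} :=
    { nonempty := ⟨D, hD, hF.1.nonempty.some, hF.1.nonempty.some_mem, Set.inter_subset_right⟩
      isConstructible := fun _ hZ => hZ.1
      nonempty_of_mem := fun _ ⟨_, C, hC, hCZ⟩ => (hmeet C hC).mono hCZ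
      mem_of_superset := fun _ ⟨_, C, hC, hCZ⟩ E hE hZE => ⟨hE, C, hC, hCZ.trans hZE⟩
      inter_mem := by
        rintro Z ⟨hZ, C, hC, hCZ⟩ Z' ⟨hZ', C', hC', hCZ'⟩
        refine ⟨hZ.inter hZ', C ∩ C', hF.1.inter_mem _ hC _ hC', ?_⟩
        rintro x ⟨⟨hxC, hxC'⟩, hxD⟩
        exact ⟨hCZ ⟨hxC, hxD⟩, hCZ' ⟨hxC', hxD⟩⟩ }
  have hFG : F ⊆ {Z | IsConstructible Z ∧ ∃ C ∈ F, C ∩ D ⊆ Z} :=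
    fun C hC => ⟨hF.1.isConstructible C hC, C, hC, Set.inter_subset_left⟩
  exact hF.2 hG hFG ⟨hD, hF.1.nonempty.some, hF.1.nonempty.some_mem, Set.inter_subset_right⟩

theorem IsMaxConstrFilter.exists_mem_of_isFoundation {F : Set (Set M)} (hF : IsMaxConstrFilter F)
    {X : Set M} (hX : X ∈ F) {ι : Type*} [Finite ι] {Xi : ι → Set M}
    (hXi : ∀ i, IsConstructible (Xi i)) (hfnd : IsFoundation X Xi) : ∃ i, Xi i ∈ F := by
  by_contra! hnot
  have havoid : ∀ i, ∃ C ∈ F, ¬(C ∩ Xi i).Nonempty := fun i => by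
    by_contra! h
    exact hnot i (hF.mem_of_forall_inter_nonempty (hXi i) h)
  choose C hCF hC using havoid
  let basis : FilterBasis M :=
    ⟨F, hF.1.nonempty, fun hC hD => ⟨_, hF.1.inter_mem _ hC _ hD, subset_rfl⟩⟩
  obtain ⟨Z, hZF, hZ⟩ := basis.mem_filter_iff.1
    (Filter.iInter_mem.2 fun i => basis.mem_filter_iff.2 ⟨C i, hCF i, subset_rfl⟩)
  have hXZ := hF.1.inter_mem _ hX _ hZF
  obtain ⟨i, x, hx, hxi⟩ := hfnd.2 _ (hF.1.isConstructible _ hXZ) (hF.1.nonempty_of_mem _ hXZ)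
    Set.inter_subset_left
  exact hC i ⟨x, Set.mem_iInter.1 (hZ hx.2) i, hxi⟩

/-- `χ` is the limit along `𝒰` of maximal filters through the sets `C₀ P`. -/
theorem exists_respectsFoundations_of_ultrafilter {ι : Type*} (𝒰 : Ultrafilter ι)
    (C₀ : ι → Set M) (hC₀ : ∀ P, IsConstructible (C₀ P)) (hne : ∀ P, (C₀ P).Nonempty) :
    ∃ χ, RespectsFoundations χ ∧ (∀ C, IsConstructible C → (∀ P, C₀ P ⊆ C) → χ C) ∧
      ∀ C, χ C → ∀ᶠ P in 𝒰, (C₀ P ∩ C).Nonempty := by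
  choose F hF hC₀F using fun P => exists_maximal_isConstrFilter (hC₀ P) (hne P)
  refine ⟨fun C => ∀ᶠ P in 𝒰, C ∈ F P, ?_,
    fun C hC hsub => .of_forall fun P => (hF P).1.mem_of_superset _ (hC₀F P) C hC (hsub P),
    fun C hC => hC.mono fun P hP =>
      (hF P).1.nonempty_of_mem _ ((hF P).1.inter_mem _ (hC₀F P) _ hP)⟩
  intro X κ _ Xi hX hXi hfnd
  by_contra! hnot
  have hall : ∀ᶠ P in 𝒰, ∀ i, Xi i ∉ F P := Filter.eventually_all.2 hnot
  obtain ⟨P, hXP, hP⟩ := (hX.and hall).exists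
  obtain ⟨i, hi⟩ := (hF P).exists_mem_of_isFoundation hXP hXi hfnd
  exact hP i hi

end MaximalFilters

section Product

variable {S T : Type*}

theorem StronglyRegularOnBoundary.of_prod_left [Monoid S] [Monoid T] [IsLeftCancelMul S]
    [IsLeftCancelMul T] (hST : StronglyRegularOnBoundary (S × T)) :
    StronglyRegularOnBoundary S := by
  intro n h hh m X Xi hX hXi hsub hne hcov
  have hdiff : X ×ˢ Set.univ \ ⋃ i, Xi i ×ˢ Set.univ =
      (X \ ⋃ i, Xi i) ×ˢ (Set.univ : Set T) := by
    rw [← Set.iUnion_prod_const, Set.prod_sdiff_prod]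
    simp
  obtain ⟨l, Y, kk, hY, hYfix, hfnd⟩ := hST n (fun k => pprod (h k) pid)
    (fun k => (hh k).prod inInvHull_pid) m (X ×ˢ Set.univ) (fun i => Xi i ×ˢ Set.univ)
    (hX.prod isConstructible_univ) (fun i => (hXi i).prod isConstructible_univ)
    (fun i => Set.prod_mono (hsub i) subset_rfl) (hdiff ▸ hne.prod Set.univ_nonempty) (by
      rw [hdiff]
      rintro ⟨a, b⟩ ⟨ha, -⟩
      obtain ⟨k, hk⟩ := Set.mem_iUnion.1 (hcov ha)
      exact Set.mem_iUnion.2 ⟨k, pprod_eq_some.2 ⟨hk, rfl⟩⟩)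
  choose C D hC hD hCD using fun j => (hY j).exists_prod
  have hCX : ∀ j, (D j).Nonempty → C j ⊆ X := fun j ⟨b, hb⟩ a ha =>
    (hfnd.1 (.inr j) (show (a, b) ∈ Y j from hCD j ▸ ⟨ha, hb⟩)).1
  refine HasFixedFoundation.of_finite (fun j : {j // (D j).Nonempty} => C j) (fun j => kk j)
    (fun j => hC j) (fun j => PFixes.of_pprod_left (hCD j ▸ hYfix j) j.2)
    ⟨Sum.forall.2 ⟨hsub, fun j => hCX j j.2⟩, fun Z hZ hZne hZX => ?_⟩
  obtain ⟨i | j, x, hxZ, hx⟩ := hfnd.2 (Z ×ˢ Set.univ) (hZ.prod isConstructible_univ)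
    (hZne.prod Set.univ_nonempty) (Set.prod_mono hZX subset_rfl)
  · exact ⟨.inl i, x.1, hxZ.1, hx.1⟩
  · rw [Sum.elim_inr, hCD j] at hx
    exact ⟨.inr ⟨j, x.2, hx.2⟩, x.1, hxZ.1, hx.1⟩

theorem exists_prod_of_not_isFoundation [Monoid S] [Monoid T] [IsLeftCancelMul S]
    [IsLeftCancelMul T] {A : Set S} {B : Set T} {ι : Type*}
    {F : ι → Set (S × T)} (hF : ∀ i, F i ⊆ A ×ˢ B) (h : ¬IsFoundation (A ×ˢ B) F) :
    ∃ C₀ D₀, IsConstructible C₀ ∧ C₀.Nonempty ∧ C₀ ⊆ A ∧ IsConstructible D₀ ∧ D₀.Nonempty ∧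
      D₀ ⊆ B ∧ ∀ i, ¬(C₀ ×ˢ D₀ ∩ F i).Nonempty := by
  simp only [IsFoundation, hF, implies_true, true_and, not_forall, not_exists] at h
  obtain ⟨Z, hZ, hZne, hZsub, hZF⟩ := h
  obtain ⟨C₀, D₀, hC₀, hD₀, rfl⟩ := hZ.exists_prod
  exact ⟨C₀, D₀, hC₀, hZne.fst, fun a ha => (hZsub (Set.mk_mem_prod ha hZne.snd.some_mem)).1,
    hD₀, hZne.snd, fun b hb => (hZsub (Set.mk_mem_prod hZne.fst.some_mem hb)).2, hZF⟩

variable {ι κ : Type} {A : Set S} {B : Set T} {Ai : ι → Set S}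
  {Bi : ι → Set T} {f : κ → S → Option S} {g : κ → T → Option T}
  {χS : Set S → Prop} {χT : Set T → Prop}

/-- Compactness: the test rectangles missing finitely many fixed rectangles converge to a pair of
boundary characters. -/
theorem exists_respectsFoundations_pair [Monoid S] [Monoid T] [IsLeftCancelMul S]
    [IsLeftCancelMul T] (hsub : ∀ i, Ai i ×ˢ Bi i ⊆ A ×ˢ B)
    (hA : IsConstructible A) (hB : IsConstructible B)
    (hno : ¬HasFixedFoundation (fun k => pprod (f k) (g k)) (A ×ˢ B) fun i => Ai i ×ˢ Bi i) :
    ∃ χS χT, RespectsFoundations χS ∧ RespectsFoundations χT ∧ χS A ∧ χT B ∧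
      (∀ i, ¬(χS (Ai i) ∧ χT (Bi i))) ∧
      ∀ k C D, IsFixedSubideal (f k) A C → IsFixedSubideal (g k) B D → ¬(χS C ∧ χT D) := by
  let Γ := {r : κ × Set S × Set T // IsFixedSubideal (f r.1) A r.2.1 ∧
    IsFixedSubideal (g r.1) B r.2.2}
  have htest (P : Finset Γ) := exists_prod_of_not_isFoundation
    (F := Sum.elim (fun i => Ai i ×ˢ Bi i) fun γ : P => γ.1.1.2.1 ×ˢ γ.1.1.2.2)
    (Sum.forall.2 ⟨hsub, fun γ => Set.prod_mono γ.1.2.1.2.1 γ.1.2.2.2.1⟩) fun hfnd =>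
      hno (.of_finite _ (fun γ : P => γ.1.1.1) (fun γ => γ.1.2.1.1.prod γ.1.2.2.1)
        (fun γ => γ.1.2.1.2.2.prod γ.1.2.2.2.2) hfnd)
  choose C₀ D₀ hC₀ hC₀ne hC₀A hD₀ hD₀ne hD₀B hdisj using htest
  let 𝒰 := Ultrafilter.of (Filter.atTop : Filter (Finset Γ))
  obtain ⟨χS, hχS, hχSA, hχSmeet⟩ :=
    exists_respectsFoundations_of_ultrafilter 𝒰 C₀ hC₀ hC₀ne
  obtain ⟨χT, hχT, hχTB, hχTmeet⟩ :=
    exists_respectsFoundations_of_ultrafilter 𝒰 D₀ hD₀ hD₀ne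
  have hmeet : ∀ C D, χS C → χT D → ∀ᶠ P in 𝒰, (C₀ P ×ˢ D₀ P ∩ C ×ˢ D).Nonempty :=
    fun C D hC hD => ((hχSmeet C hC).and (hχTmeet D hD)).mono fun P hP => by
      rw [Set.prod_inter_prod]
      exact hP.1.prod hP.2
  refine ⟨χS, χT, hχS, hχT, hχSA A hA hC₀A, hχTB B hB hD₀B, fun i hi => ?_,
    fun k C D hC hD hi => ?_⟩
  · obtain ⟨P, hP⟩ := (hmeet _ _ hi.1 hi.2).exists
    exact hdisj P (.inl i) hP
  · let γ : Γ := ⟨(k, C, D), hC, hD⟩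
    have hγ : ∀ᶠ P in (𝒰 : Filter (Finset Γ)), γ ∈ P := Ultrafilter.of_le _
      ((Filter.eventually_ge_atTop {γ}).mono fun P => Finset.singleton_subset_iff.1)
    obtain ⟨P, hγP, hP⟩ := (hγ.and (hmeet _ _ hi.1 hi.2)).exists
    exact hdisj P (.inr ⟨γ, hγP⟩) hP

variable [Finite ι] [Finite κ]

theorem exists_fixed_fiber [Monoid T] (hT : StronglyRegularOnBoundary T)
    (hχT : RespectsFoundations χT) (hg : ∀ k, InInvHull (g k)) (hB : IsConstructible B)
    (hBi : ∀ i, IsConstructible (Bi i)) (hsub : ∀ i, Ai i ×ˢ Bi i ⊆ A ×ˢ B)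
    (hcov : A ×ˢ B \ ⋃ i, Ai i ×ˢ Bi i ⊆ ⋃ k, {x | pprod (f k) (g k) x = some x})
    (hχB : χT B) {a : S} (ha : a ∈ A) (hnot : ∀ i, a ∈ Ai i → ¬χT (Bi i)) :
    ∃ k, f k a = some a ∧ ∃ D, IsFixedSubideal (g k) B D ∧ χT D := by
  have hcovT : B \ ⋃ i : {i // a ∈ Ai i}, Bi i ⊆
      ⋃ k : {k // f k a = some a}, {b | g k b = some b} := by
    rintro b ⟨hb, hbi⟩
    have hab : (a, b) ∉ ⋃ i, Ai i ×ˢ Bi i := fun hmem => by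
      obtain ⟨i, hai, hbi'⟩ := Set.mem_iUnion.1 hmem
      exact hbi (Set.mem_iUnion.2 ⟨⟨i, hai⟩, hbi'⟩)
    obtain ⟨k, hk⟩ := Set.mem_iUnion.1 (hcov ⟨⟨ha, hb⟩, hab⟩)
    obtain ⟨hfk, hgk⟩ := pprod_eq_some.1 hk
    exact Set.mem_iUnion.2 ⟨⟨k, hfk⟩, hgk⟩
  rcases hT.exists_isFixedSubideal (Xi := fun i : {i // a ∈ Ai i} => Bi i)
    (f := fun k : {k // f k a = some a} => g k) hχT (fun k => hg k) hB (fun i => hBi i)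
    (fun i b hb => (hsub i (Set.mk_mem_prod i.2 hb)).2) hcovT hχB
    with ⟨i, hi⟩ | ⟨k, D, hD, hχD⟩
  · exact absurd hi (hnot i i.2)
  · exact ⟨k, k.2, D, hD, hχD⟩

theorem exists_fixed_rect [Monoid S] [Monoid T] (hS : StronglyRegularOnBoundary S)
    (hT : StronglyRegularOnBoundary T) (hχS : RespectsFoundations χS)
    (hχT : RespectsFoundations χT) (hf : ∀ k, InInvHull (f k)) (hg : ∀ k, InInvHull (g k))
    (hA : IsConstructible A) (hB : IsConstructible B) (hAi : ∀ i, IsConstructible (Ai i))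
    (hBi : ∀ i, IsConstructible (Bi i)) (hsub : ∀ i, Ai i ×ˢ Bi i ⊆ A ×ˢ B)
    (hcov : A ×ˢ B \ ⋃ i, Ai i ×ˢ Bi i ⊆ ⋃ k, {x | pprod (f k) (g k) x = some x})
    (hχA : χS A) (hχB : χT B) (hχi : ∀ i, ¬(χS (Ai i) ∧ χT (Bi i))) :
    ∃ k C D, IsFixedSubideal (f k) A C ∧ IsFixedSubideal (g k) B D ∧ χS C ∧ χT D := by
  have hcovS : A \ ⋃ i : {i // χT (Bi i)}, Ai i ⊆
      ⋃ k : {k // ∃ D, IsFixedSubideal (g k) B D ∧ χT D}, {a | f k a = some a} := by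
    rintro a ⟨ha, hai⟩
    obtain ⟨k, hk, hD⟩ := exists_fixed_fiber hT hχT hg hB hBi hsub hcov hχB ha
      fun i hai' hi => hai (Set.mem_iUnion.2 ⟨⟨i, hi⟩, hai'⟩)
    exact Set.mem_iUnion.2 ⟨⟨k, hD⟩, hk⟩
  rcases hS.exists_isFixedSubideal (Xi := fun i : {i // χT (Bi i)} => Ai i)
    (f := fun k : {k // ∃ D, IsFixedSubideal (g k) B D ∧ χT D} => f k) hχS (fun k => hf k) hA
    (fun i => hAi i) (fun i a ha => (hsub i (Set.mk_mem_prod ha (hχT.nonempty i.2).some_mem)).1)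
    hcovS hχA with ⟨i, hi⟩ | ⟨k, C, hC, hχC⟩
  · exact absurd ⟨hi, i.2⟩ (hχi i)
  · obtain ⟨D, hD, hχD⟩ := k.2
    exact ⟨k, C, D, hC, hD, hχC, hχD⟩

theorem StronglyRegularOnBoundary.prod [Monoid S] [Monoid T] [IsLeftCancelMul S]
    [IsLeftCancelMul T] (hS : StronglyRegularOnBoundary S) (hT : StronglyRegularOnBoundary T) :
    StronglyRegularOnBoundary (S × T) := by
  intro n H hH m X Xi hX hXi hsub _ hcov
  choose f g hf hg hfg using fun k => (hH k).exists_pprod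
  choose Ai Bi hAi hBi hXi using fun i => (hXi i).exists_prod
  obtain ⟨A, B, hA, hB, rfl⟩ := hX.exists_prod
  obtain rfl : H = fun k => pprod (f k) (g k) := funext hfg
  obtain rfl : Xi = fun i => Ai i ×ˢ Bi i := funext hXi
  by_contra hno
  obtain ⟨χS, χT, hχS, hχT, hχA, hχB, hχi, hχfix⟩ :=
    exists_respectsFoundations_pair hsub hA hB hno
  obtain ⟨k, C, D, hC, hD, hχC, hχD⟩ :=
    exists_fixed_rect hS hT hχS hχT hf hg hA hB hAi hBi hsub hcov hχA hχB hχi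
  exact hχfix k C D hC hD ⟨hχC, hχD⟩

end Product

/-- The direct product of two left cancellative monoids is strongly
C*-regular on the boundary if and only if both factors are. -/
theorem cstar_stmt6 {S T : Type*} [Monoid S] [Monoid T]
    [IsLeftCancelMul S] [IsLeftCancelMul T] :
    StronglyRegularOnBoundary (S × T) ↔
      (StronglyRegularOnBoundary S ∧ StronglyRegularOnBoundary T) :=
  ⟨fun h => ⟨h.of_prod_left, (h.of_mulEquiv MulEquiv.prodComm).of_prod_left⟩,
    fun h => h.1.prod h.2⟩

end SgC
end

section
/- The monoid R is left cancellative: for all r, u, v ∈ R, if r u = r v then u = v. -/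
open scoped Classical

namespace SgC

variable {M : Type*}

/-! ### The monoid `R` -/

/-- Generators of the monoid `R`. -/
inductive Gen : Type
  | a : Gen
  | b : Gen
  | c : Gen
  | d : Gen
  | f : Gen
  | x : ℤ → Gen
  | y : ℤ → Gen

/-- The defining relations of the monoid `R`. -/
inductive RRel : FreeMonoid Gen → FreeMonoid Gen → Prop
  | abx (n : ℤ) : RRel (FreeMonoid.of Gen.a * FreeMonoid.of Gen.b * FreeMonoid.of (Gen.x n))
      (FreeMonoid.of Gen.b * FreeMonoid.of (Gen.x n))
  | aby (n : ℤ) : RRel (FreeMonoid.of Gen.a * FreeMonoid.of Gen.b * FreeMonoid.of (Gen.y n))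
      (FreeMonoid.of Gen.b * FreeMonoid.of (Gen.y (n + 1)))
  | cbx (n : ℤ) : RRel (FreeMonoid.of Gen.c * FreeMonoid.of Gen.b * FreeMonoid.of (Gen.x n))
      (FreeMonoid.of Gen.b * FreeMonoid.of (Gen.x (n + 1)))
  | cby (n : ℤ) : RRel (FreeMonoid.of Gen.c * FreeMonoid.of Gen.b * FreeMonoid.of (Gen.y n))
      (FreeMonoid.of Gen.b * FreeMonoid.of (Gen.y n))
  | dbx (n : ℤ) (z : Gen) :
      RRel (FreeMonoid.of Gen.d * FreeMonoid.of Gen.b * FreeMonoid.of (Gen.x n) * FreeMonoid.of z)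
        (FreeMonoid.of Gen.b * FreeMonoid.of (Gen.x n) * FreeMonoid.of z)
  | fby (n : ℤ) (z : Gen) :
      RRel (FreeMonoid.of Gen.f * FreeMonoid.of Gen.b * FreeMonoid.of (Gen.y n) * FreeMonoid.of z)
        (FreeMonoid.of Gen.b * FreeMonoid.of (Gen.y n) * FreeMonoid.of z)

/-- The monoid `R`: the quotient of the free monoid on the generators by the congruence
generated by the defining relations. -/
def R : Type := (conGen RRel).Quotient

noncomputable instance : Monoid R := inferInstanceAs (Monoid (conGen RRel).Quotient)

/-- The quotient map from the free monoid on the generators onto `R`. -/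
def qR : FreeMonoid Gen →* R := Con.mk' _

/-- The image in `R` of a generator. -/
noncomputable def gen (g : Gen) : R := qR (FreeMonoid.of g)

/-- A word contains a forbidden factor. -/
def IsForbidden (w : FreeMonoid Gen) : Prop :=
  ∃ n : ℤ,
    w = FreeMonoid.of Gen.a * FreeMonoid.of Gen.b * FreeMonoid.of (Gen.x n) ∨
    w = FreeMonoid.of Gen.a * FreeMonoid.of Gen.b * FreeMonoid.of (Gen.y n) ∨
    w = FreeMonoid.of Gen.c * FreeMonoid.of Gen.b * FreeMonoid.of (Gen.x n) ∨
    w = FreeMonoid.of Gen.c * FreeMonoid.of Gen.b * FreeMonoid.of (Gen.y n) ∨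
    w = FreeMonoid.of Gen.d * FreeMonoid.of Gen.b * FreeMonoid.of (Gen.x n) ∨
    w = FreeMonoid.of Gen.f * FreeMonoid.of Gen.b * FreeMonoid.of (Gen.y n)

/-- A word is reduced if it contains no forbidden factor. -/
def ReducedWord (u : FreeMonoid Gen) : Prop :=
  ¬ ∃ p w s : FreeMonoid Gen, IsForbidden w ∧ u = p * w * s

/-- The prefix word `w₁ w₂ ⋯ wₙ` of an infinite word. -/
def prefixWord (w : ℕ → Gen) (n : ℕ) : FreeMonoid Gen :=
  FreeMonoid.ofList ((List.range n).map w)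

end SgC

/-!
The relations of `R` only ever rewrite a generator standing directly in front of a factor
`b x_n` or `b y_n`. Hence `R` acts on lists of generators: a generator is prepended, and the
relation that then fits at the front of the list, if any, is applied. The rewrite can be
undone, so every element acts injectively, and evaluating a list in `R` inverts the orbit map
`u ↦ u • []`. Thus `r * u = r * v` gives `r • (u • []) = r • (v • [])`, then `u • [] = v • []`
and `u = v`.
-/

theorem IsLeftCancelMul.of_injective_orbit {M α : Type*} [Monoid M] (φ : M →* Function.End α)
    (hφ : ∀ m, Function.Injective (φ m)) (o : α) (ho : Function.Injective (φ · o)) :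
    IsLeftCancelMul M where
  mul_left_cancel r u v h := ho <| hφ r <| by
    have h' := congrArg (φ · o) h
    simp only [map_mul] at h'
    exact h'

theorem FreeMonoid.injective_lift_apply {α β : Type*} {f : α → Function.End β}
    (hf : ∀ a, Function.Injective (f a)) (w : FreeMonoid α) :
    Function.Injective (FreeMonoid.lift f w) := by
  induction w using FreeMonoid.inductionOn' with
  | one => exact Function.injective_id
  | of_mul g w ih =>
    rw [map_mul]
    exact (hf g).comp ih

namespace SgC

def act : Gen → List Gen → List Gen
  | .a, .b :: .x n :: t => .b :: .x n :: t
  | .a, .b :: .y n :: t => .b :: .y (n + 1) :: t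
  | .c, .b :: .x n :: t => .b :: .x (n + 1) :: t
  | .c, .b :: .y n :: t => .b :: .y n :: t
  | .d, .b :: .x n :: z :: t => .b :: .x n :: z :: t
  | .f, .b :: .y n :: z :: t => .b :: .y n :: z :: t
  | g, w => g :: w

def unact : Gen → List Gen → List Gen
  | .a, .b :: .y n :: t => .b :: .y (n - 1) :: t
  | .c, .b :: .x n :: t => .b :: .x (n - 1) :: t
  | .a, .a :: w | .c, .c :: w | .d, .d :: w | .f, .f :: w => w
  | .a, w | .c, w | .d, w | .f, w => w
  | _, w => w.tail

theorem leftInverse_unact_act (g : Gen) : Function.LeftInverse (unact g) (act g) := by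
  intro w
  cases g <;> unfold act <;> split <;> simp_all [unact]

theorem act_ne_nil (g : Gen) (w : List Gen) : act g w ≠ [] := by
  unfold act; split <;> simp

def actHom : FreeMonoid Gen →* Function.End (List Gen) := FreeMonoid.lift act

theorem actHom_eq_of_rrel {u v : FreeMonoid Gen} (h : RRel u v) : actHom u = actHom v := by
  funext w
  cases h with
  | dbx n z =>
    obtain ⟨g, t, hzw⟩ := List.exists_cons_of_ne_nil (act_ne_nil z w)
    change act .d (act .b (act (.x n) (act z w))) = act .b (act (.x n) (act z w))
    rw [hzw]; rfl
  | fby n z =>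
    obtain ⟨g, t, hzw⟩ := List.exists_cons_of_ne_nil (act_ne_nil z w)
    change act .f (act .b (act (.y n) (act z w))) = act .b (act (.y n) (act z w))
    rw [hzw]; rfl
  | _ => rfl

noncomputable def actR : R →* Function.End (List Gen) :=
  Con.lift _ actHom (Con.conGen_le.2 fun _ _ h => (Con.ker_rel _).2 (actHom_eq_of_rrel h))

theorem actR_qR (w : FreeMonoid Gen) : actR (qR w) = actHom w := Con.lift_mk' _ w

noncomputable def evalR (l : List Gen) : R := qR (FreeMonoid.ofList l)

theorem qR_mul_eq_of_rrel {u v : FreeMonoid Gen} (h : RRel u v) (t : FreeMonoid Gen) :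
    qR (u * t) = qR (v * t) :=
  (Con.eq _).2 ((conGen RRel).mul (ConGen.Rel.of u v h) ((conGen RRel).refl t))

theorem evalR_act (g : Gen) (l : List Gen) : evalR (act g l) = gen g * evalR l := by
  unfold act
  -- multiplication in `FreeMonoid` is list append, so each case is a relation up to `rfl`
  split
  next n t => exact (qR_mul_eq_of_rrel (.abx n) t).symm
  next n t => exact (qR_mul_eq_of_rrel (.aby n) t).symm
  next n t => exact (qR_mul_eq_of_rrel (.cbx n) t).symm
  next n t => exact (qR_mul_eq_of_rrel (.cby n) t).symm
  next n z t => exact (qR_mul_eq_of_rrel (.dbx n z) t).symm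
  next n z t => exact (qR_mul_eq_of_rrel (.fby n z) t).symm
  next => rfl

theorem qR_surjective : Function.Surjective qR := Con.mk'_surjective

theorem evalR_actHom (w : FreeMonoid Gen) (l : List Gen) :
    evalR (actHom w l) = qR w * evalR l := by
  induction w using FreeMonoid.inductionOn' with
  | one => exact (one_mul _).symm
  | of_mul g w ih =>
    rw [map_mul, map_mul, mul_assoc, ← ih]
    exact evalR_act g _

theorem evalR_actR_nil (r : R) : evalR (actR r []) = r := by
  obtain ⟨w, rfl⟩ := qR_surjective r
  rw [actR_qR, evalR_actHom]
  exact mul_one _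

theorem injective_actR (r : R) : Function.Injective (actR r) := by
  obtain ⟨w, rfl⟩ := qR_surjective r
  rw [actR_qR]
  exact FreeMonoid.injective_lift_apply (fun g => (leftInverse_unact_act g).injective) w

instance : IsLeftCancelMul R :=
  .of_injective_orbit actR injective_actR [] (Function.LeftInverse.injective evalR_actR_nil)

/-- The monoid `R` is left cancellative. -/
theorem cstar_stmt12 : ∀ r u v : R, r * u = r * v → u = v :=
  fun _ _ _ => mul_left_cancel

end SgC
end

section
/- If u and v are reduced words in the generators of R that represent the same element of R, then u and v are equal as words; that is, the quotient map from the free monoid on the generators of R onto R is injective on the set of reduced words. -/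
open scoped Classical

namespace SgC

variable {M : Type*}

/-! Let each generator act on words by prepending it and then, if the word now begins with the
left-hand side of a defining relation, replacing that factor by the right-hand side. The
relations hold for this action, so it factors through `R`. Prepending a letter to a reduced word
never triggers a rewrite, so the element of `R` represented by a reduced word `u` sends the empty
word to `u` itself, and `u` is recovered from its image in `R`. -/

def leftMul : Gen → List Gen → List Gen
  | Gen.a, Gen.b :: Gen.x n :: r => Gen.b :: Gen.x n :: r
  | Gen.a, Gen.b :: Gen.y n :: r => Gen.b :: Gen.y (n + 1) :: r
  | Gen.c, Gen.b :: Gen.x n :: r => Gen.b :: Gen.x (n + 1) :: r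
  | Gen.c, Gen.b :: Gen.y n :: r => Gen.b :: Gen.y n :: r
  | Gen.d, Gen.b :: Gen.x n :: z :: r => Gen.b :: Gen.x n :: z :: r
  | Gen.f, Gen.b :: Gen.y n :: z :: r => Gen.b :: Gen.y n :: z :: r
  | g, t => g :: t

lemma leftMul_ne_nil (g : Gen) (t : List Gen) : leftMul g t ≠ [] := by
  unfold leftMul
  split <;> simp

def wordAction : FreeMonoid Gen →* Function.End (List Gen) := FreeMonoid.lift leftMul

lemma wordAction_of (g : Gen) (t : List Gen) :
    wordAction (FreeMonoid.of g) t = leftMul g t := rfl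

lemma wordAction_mul_apply (u v : FreeMonoid Gen) (t : List Gen) :
    wordAction (u * v) t = wordAction u (wordAction v t) := by
  rw [map_mul]
  rfl

lemma wordAction_eq_of_rrel {u v : FreeMonoid Gen} (h : RRel u v) :
    wordAction u = wordAction v := by
  funext t
  cases h with
  | dbx n z | fby n z =>
    obtain ⟨g, r, hz⟩ := List.exists_cons_of_ne_nil (leftMul_ne_nil z t)
    simp only [wordAction_mul_apply, wordAction_of, hz]
    rfl
  | _ => rfl

lemma wordAction_eq_of_qR_eq {u v : FreeMonoid Gen} (h : qR u = qR v) :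
    wordAction u = wordAction v :=
  (Con.conGen_le (c := Con.ker wordAction)).2 (fun _ _ => wordAction_eq_of_rrel)
    ((Con.eq _).1 h)

lemma ReducedWord.of_mul_left {u v : FreeMonoid Gen} (h : ReducedWord (u * v)) :
    ReducedWord v := by
  rintro ⟨p, w, s, hw, rfl⟩
  exact h ⟨u * p, w, s, hw, by simp only [mul_assoc]⟩

lemma not_reducedWord_of_isForbidden {g₁ g₂ g₃ : Gen} (r : List Gen)
    (hw : IsForbidden (FreeMonoid.of g₁ * FreeMonoid.of g₂ * FreeMonoid.of g₃)) :
    ¬ ReducedWord (FreeMonoid.ofList (g₁ :: g₂ :: g₃ :: r)) :=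
  fun h => h ⟨1, _, FreeMonoid.ofList r, hw, rfl⟩

lemma leftMul_of_reducedWord {g : Gen} {t : List Gen}
    (h : ReducedWord (FreeMonoid.ofList (g :: t))) : leftMul g t = g :: t := by
  rcases t with _ | ⟨_ | _ | _ | _ | _ | n | n, _ | ⟨_ | _ | _ | _ | _ | m | m, r⟩⟩ <;>
    cases g <;>
    first
      | rfl
      | exact absurd h (not_reducedWord_of_isForbidden r ⟨m, by simp⟩)

lemma wordAction_apply_nil_of_reducedWord {u : FreeMonoid Gen} (hu : ReducedWord u) :
    wordAction u [] = u.toList := by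
  induction u using FreeMonoid.inductionOn' with
  | one => rfl
  | of_mul g t ih =>
    rw [wordAction_mul_apply, ih hu.of_mul_left, wordAction_of,
      leftMul_of_reducedWord (g := g) (t := t.toList) hu]
    rfl

/-- The quotient map onto `R` is injective on reduced words: two
reduced words representing the same element of `R` are equal. -/
theorem cstar_stmt13 (u v : FreeMonoid Gen)
    (hu : ReducedWord u) (hv : ReducedWord v) (h : qR u = qR v) : u = v := by
  apply FreeMonoid.toList.injective
  rw [← wordAction_apply_nil_of_reducedWord hu, ← wordAction_apply_nil_of_reducedWord hv,
    wordAction_eq_of_qR_eq h]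

end SgC
end

section
/- Let w = (w_i)_{i ≥ 1} and v = (v_i)_{i ≥ 1} be two distinct reduced infinite words in the generators of R (sequences of generators none of whose finite prefixes contains a forbidden factor). Then the associated characters differ: there exists a constructible right ideal A ∈ J(R) such that exactly one of the two statements '∃ n ≥ 1 with w_1 w_2 ⋯ w_n ∈ A (as an element of R)' and '∃ n ≥ 1 with v_1 v_2 ⋯ v_n ∈ A' holds. -/
open scoped Classical

namespace SgC

variable {M : Type*}

/-!
Words over the generators are compared through a stack machine: a word is kept backwards as a
stack, and `push` appends a letter and then deletes the letters `a, c, d, f` that the defining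
relations cancel in front of the topmost `b x_n` or `b y_n`, adjusting the index `n`. The machine
respects the relations and leaves reduced words alone, so if `s * t = W` in `R` with `s` and `W`
reduced, then `W` is what the machine makes of `t` when started from `s`. Each step only replaces
a final segment of the word that begins with a letter other than `b` by one that begins with `b`;
hence `s` is either a prefix of `W` or branches off from `W` at a letter `b` of `W`.

If `w` and `v` first differ at position `k`, one of them, say `u`, has `u k ≠ b`. The principal
right ideal generated by the length-`k + 1` prefix of the other word contains that prefix but, by
the above, no prefix of `u`.
-/

theorem isConstructible_setOf_dvd [Monoid M] (σ : M) : IsConstructible {t : M | σ ∣ t} := by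
  refine ⟨pblock (1, σ), ⟨[(1, σ)], List.cons_ne_nil _ _, rfl⟩, ?_⟩
  ext t
  simp [pdom, pblock, pcomp, pinv, ptransl, Dvd.dvd, eq_comm]

section Prefixes

variable {α : Type*} (β : α)

def IsPrefixOrForksAt (s W : List α) : Prop :=
  s <+: W ∨ ∃ p g, g ≠ β ∧ p ++ [g] <+: s ∧ p ++ [β] <+: W

variable {β}

theorem IsPrefixOrForksAt.refl (s : List α) : IsPrefixOrForksAt β s s :=
  Or.inl (List.prefix_refl s)

theorem IsPrefixOrForksAt.append {s W : List α} (h : IsPrefixOrForksAt β s W) (X : List α) :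
    IsPrefixOrForksAt β s (W ++ X) := by
  rcases h with h | ⟨p, g, hg, hs, hW⟩
  · exact Or.inl (h.trans (List.prefix_append W X))
  · exact Or.inr ⟨p, g, hg, hs, hW.trans (List.prefix_append W X)⟩

theorem IsPrefixOrForksAt.replace {s T Z Z' : List α} {g : α}
    (h : IsPrefixOrForksAt β s (T ++ g :: Z)) (hg : g ≠ β) :
    IsPrefixOrForksAt β s (T ++ β :: Z') := by
  have hT : T ++ [g] <+: T ++ g :: Z := ⟨Z, by simp⟩
  have forks (hs : T ++ [g] <+: s) : IsPrefixOrForksAt β s (T ++ β :: Z') :=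
    Or.inr ⟨T, g, hg, hs, ⟨Z', by simp⟩⟩
  rcases h with hs | ⟨p, g', hg', hs, hp⟩
  · by_cases hlen : s.length ≤ T.length
    · exact Or.inl ((List.prefix_of_prefix_length_le hs (List.prefix_append _ _) hlen).trans
        (List.prefix_append _ _))
    · exact forks (List.prefix_of_prefix_length_le hT hs (by simp; omega))
  · have hpZ : p <+: T ++ g :: Z := (List.prefix_append p [β]).trans hp
    rcases lt_trichotomy p.length T.length with hlt | heq | hgt
    · exact Or.inr ⟨p, g', hg', hs, (List.prefix_of_prefix_length_le hp (List.prefix_append T _)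
        (by simp; omega)).trans (List.prefix_append _ _)⟩
    · obtain rfl : p = T :=
        (List.prefix_of_prefix_length_le hpZ (List.prefix_append _ _) heq.le).eq_of_length heq
      exact Or.inr ⟨p, g', hg', hs, ⟨Z', by simp⟩⟩
    · exact forks ((List.prefix_of_prefix_length_le hT hpZ (by simp; omega)).trans
        ((List.prefix_append p [g']).trans hs))

theorem eq_of_concat_prefix {q V : List α} {x y : α} (hx : q ++ [x] <+: V)
    (hy : q ++ [y] <+: V) : x = y := by
  simpa using (List.prefix_of_prefix_length_le hx hy (by simp)).eq_of_length (by simp)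

theorem not_isPrefixOrForksAt {p V W : List α} {g γ : α} (hpV : p ++ [g] <+: V)
    (hWV : W <+: V) (hγ : γ ≠ g) (hg : g ≠ β) : ¬ IsPrefixOrForksAt β (p ++ [γ]) W := by
  rintro (hs | ⟨q, h, hh, hq, hqW⟩)
  · exact hγ (eq_of_concat_prefix (hs.trans hWV) hpV)
  rcases List.prefix_concat_iff.1 hq with heq | hqp
  · obtain rfl : q = p := (List.append_inj' heq rfl).1
    exact hg (eq_of_concat_prefix hpV (hqW.trans hWV))
  · exact hh (eq_of_concat_prefix ((hqp.trans (List.prefix_append p [g])).trans hpV)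
      (hqW.trans hWV))

theorem map_range_prefix (u : ℕ → α) {m n : ℕ} (h : m ≤ n) :
    (List.range m).map u <+: (List.range n).map u := by
  simpa [Nat.min_eq_left h] using (List.take_prefix m (List.range n)).map u

end Prefixes

/- `xShift g = some k` means that `g b x_n = b x_{n+k}` in `R`; `xShift'` is the version for
`b x_n` followed by a further letter, where `d` can be deleted too. Same for `y`. -/
def xShift : Gen → Option ℤ
  | .a => some 0
  | .c => some 1
  | _ => none

def yShift : Gen → Option ℤ
  | .a => some 1
  | .c => some 0
  | _ => none

def xShift' : Gen → Option ℤ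
  | .d => some 0
  | g => xShift g

def yShift' : Gen → Option ℤ
  | .f => some 0
  | g => yShift g

theorem xShift'_of_xShift (g : Gen) (k : ℤ) (h : xShift g = some k) : xShift' g = some k := by
  cases g <;> simp_all [xShift, xShift']

theorem yShift'_of_yShift (g : Gen) (k : ℤ) (h : yShift g = some k) : yShift' g = some k := by
  cases g <;> simp_all [yShift, yShift']

def absorb (δ : Gen → Option ℤ) : ℤ → List Gen → ℤ × List Gen
  | n, g :: T =>
    match δ g with
    | some k => absorb δ (n + k) T
    | none => (n, g :: T)
  | n, [] => (n, [])

def reduceTop : List Gen → List Gen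
  | .x n :: .b :: T => .x (absorb xShift n T).1 :: .b :: (absorb xShift n T).2
  | .y n :: .b :: T => .y (absorb yShift n T).1 :: .b :: (absorb yShift n T).2
  | z :: .x n :: .b :: T => z :: .x (absorb xShift' n T).1 :: .b :: (absorb xShift' n T).2
  | z :: .y n :: .b :: T => z :: .y (absorb yShift' n T).1 :: .b :: (absorb yShift' n T).2
  | L => L

def push (S : List Gen) (g : Gen) : List Gen := reduceTop (g :: S)

def pushAll (S l : List Gen) : List Gen := l.foldl push S

theorem pushAll_append (S l₁ l₂ : List Gen) :
    pushAll S (l₁ ++ l₂) = pushAll (pushAll S l₁) l₂ :=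
  List.foldl_append

@[simp] theorem reduceTop_cons_x (z : Gen) (n : ℤ) (T : List Gen) :
    reduceTop (z :: .x n :: .b :: T) =
      z :: .x (absorb xShift' n T).1 :: .b :: (absorb xShift' n T).2 := by
  cases z <;> rfl

@[simp] theorem reduceTop_cons_y (z : Gen) (n : ℤ) (T : List Gen) :
    reduceTop (z :: .y n :: .b :: T) =
      z :: .y (absorb yShift' n T).1 :: .b :: (absorb yShift' n T).2 := by
  cases z <;> rfl

theorem absorb_absorb {δ₁ δ₂ : Gen → Option ℤ} (h : ∀ g k, δ₁ g = some k → δ₂ g = some k) :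
    ∀ (n : ℤ) (T : List Gen), absorb δ₂ (absorb δ₁ n T).1 (absorb δ₁ n T).2 = absorb δ₂ n T
  | n, [] => rfl
  | n, g :: T => by
    rcases h₁ : δ₁ g with _ | k
    · simp [absorb, h₁]
    · simp [absorb, h₁, h g k h₁, absorb_absorb h (n + k) T]

theorem pushAll_eq_of_rrel {u v : FreeMonoid Gen} (h : RRel u v) (S : List Gen) :
    pushAll S u.toList = pushAll S v.toList := by
  have hx := absorb_absorb xShift'_of_xShift
  have hy := absorb_absorb yShift'_of_yShift
  cases h <;> rcases S with _ | ⟨g₀, _ | ⟨g₁, T⟩⟩ <;> (try cases g₀) <;> (try cases g₁) <;>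
    simp [pushAll, push, reduceTop, absorb, xShift, yShift, xShift', yShift', hx, hy]

def stackCon : Con (FreeMonoid Gen) where
  r u v := ∀ S, pushAll S u.toList = pushAll S v.toList
  iseqv := ⟨fun _ _ => rfl, fun h S => (h S).symm, fun h₁ h₂ S => (h₁ S).trans (h₂ S)⟩
  mul' h₁ h₂ S := by simp only [FreeMonoid.toList_mul, pushAll_append, h₁, h₂]

theorem pushAll_eq_of_qR_eq {u v : FreeMonoid Gen} (h : qR u = qR v) (S : List Gen) :
    pushAll S u.toList = pushAll S v.toList := by
  have hle : conGen RRel ≤ stackCon := Con.conGen_le.2 fun _ _ => pushAll_eq_of_rrel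
  exact hle ((conGen RRel).eq.1 h) S

theorem IsForbidden.ne_b {g h : Gen} (hf : IsForbidden (.of g * .of .b * .of h)) : g ≠ .b := by
  rintro rfl
  obtain ⟨n, hn⟩ := hf
  simp only [← FreeMonoid.toList.injective.eq_iff, FreeMonoid.toList_mul,
    FreeMonoid.toList_of] at hn
  simp at hn

def AbsorbsOnlyForbidden (δ : Gen → Option ℤ) (t : ℤ → Gen) : Prop :=
  ∀ g n, δ g ≠ none → IsForbidden (.of g * .of .b * .of (t n))

theorem AbsorbsOnlyForbidden.mono {δ₁ δ₂ : Gen → Option ℤ} {t : ℤ → Gen}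
    (h : AbsorbsOnlyForbidden δ₂ t) (hle : ∀ g k, δ₁ g = some k → δ₂ g = some k) :
    AbsorbsOnlyForbidden δ₁ t := by
  intro g n hg
  obtain ⟨k, hk⟩ := Option.ne_none_iff_exists'.1 hg
  exact h g n (by simp [hle g k hk])

theorem absorbsOnlyForbidden_xShift' : AbsorbsOnlyForbidden xShift' .x := by
  intro g n hg
  cases g <;> simp [xShift', xShift] at hg ⊢ <;> exact ⟨n, by simp⟩

theorem absorbsOnlyForbidden_yShift' : AbsorbsOnlyForbidden yShift' .y := by
  intro g n hg
  cases g <;> simp [yShift', yShift] at hg ⊢ <;> exact ⟨n, by simp⟩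

theorem absorb_eq_self_or (δ : Gen → Option ℤ) :
    ∀ (n : ℤ) (T : List Gen), absorb δ n T = (n, T) ∨
      ∃ D, D ≠ [] ∧ T = D ++ (absorb δ n T).2 ∧ ∀ g ∈ D, δ g ≠ none
  | n, [] => Or.inl rfl
  | n, g :: T => by
    rcases hg : δ g with _ | k
    · exact Or.inl (by simp [absorb, hg])
    · have habs : absorb δ n (g :: T) = absorb δ (n + k) T := by simp [absorb, hg]
      refine Or.inr ?_
      rw [habs]
      rcases absorb_eq_self_or δ (n + k) T with h | ⟨D, -, hD, hδ⟩
      · exact ⟨[g], by simp, by simp [h], by simp [hg]⟩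
      · exact ⟨g :: D, by simp, congrArg _ hD, List.forall_mem_cons.2 ⟨by simp [hg], hδ⟩⟩

theorem reduceTop_shape (L : List Gen) : reduceTop L = L ∨
    ∃ (Z T : List Gen) (t : ℤ → Gen) (δ : Gen → Option ℤ) (n : ℤ),
      AbsorbsOnlyForbidden δ t ∧ L = Z ++ t n :: .b :: T ∧
      reduceTop L = Z ++ t (absorb δ n T).1 :: .b :: (absorb δ n T).2 := by
  have kx := absorbsOnlyForbidden_xShift'
  have ky := absorbsOnlyForbidden_yShift'
  have kx₀ := kx.mono xShift'_of_xShift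
  have ky₀ := ky.mono yShift'_of_yShift
  rcases L with _ | ⟨g₀, _ | ⟨g₁, _ | ⟨g₂, T⟩⟩⟩
  · exact Or.inl rfl
  · exact Or.inl (by cases g₀ <;> rfl)
  · cases g₀ <;> cases g₁ <;>
      first
        | exact Or.inr ⟨[], [], _, _, _, kx₀, rfl, rfl⟩
        | exact Or.inr ⟨[], [], _, _, _, ky₀, rfl, rfl⟩
        | exact Or.inl rfl
  · cases g₀ <;> cases g₁ <;> cases g₂ <;>
      first
        | exact Or.inr ⟨[], _, _, _, _, kx₀, rfl, rfl⟩
        | exact Or.inr ⟨[], _, _, _, _, ky₀, rfl, rfl⟩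
        | exact Or.inr ⟨[_], _, _, _, _, kx, rfl, rfl⟩
        | exact Or.inr ⟨[_], _, _, _, _, ky, rfl, rfl⟩
        | exact Or.inl rfl

theorem reduceTop_eq_self_of_reduced {L : List Gen} (h : ReducedWord (.ofList L.reverse)) :
    reduceTop L = L := by
  rcases reduceTop_shape L with h' | ⟨Z, T, t, δ, n, hδ, rfl, hL⟩
  · exact h'
  rw [hL]
  rcases T with _ | ⟨g, T⟩
  · simp [absorb]
  · rcases hg : δ g with _ | k
    · simp [absorb, hg]
    · refine absurd ⟨.ofList T.reverse, _, .ofList Z.reverse, hδ g n (by simp [hg]), ?_⟩ h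
      apply FreeMonoid.toList.injective
      simp

theorem reduceTop_eq_self_or_forks (L : List Gen) : reduceTop L = L ∨
    ∃ (Z Z' T : List Gen) (g : Gen), g ≠ .b ∧ L = Z ++ g :: T ∧ reduceTop L = Z' ++ .b :: T := by
  rcases reduceTop_shape L with h | ⟨Z, T, t, δ, n, hδ, rfl, hL⟩
  · exact Or.inl h
  rcases absorb_eq_self_or δ n T with h | ⟨D, hD, hT, hDδ⟩
  · exact Or.inl (by rw [hL, h])
  obtain ⟨D₀, g, rfl⟩ := (List.eq_nil_or_concat D).resolve_left hD
  refine Or.inr ⟨Z ++ t n :: .b :: D₀, Z ++ [t (absorb δ n T).1], (absorb δ n T).2, g,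
    (hδ g n (hDδ g (by simp))).ne_b, ?_, by simp [hL]⟩
  conv_lhs => rw [hT]
  simp

theorem ReducedWord.of_append {l₁ l₂ : List Gen} (h : ReducedWord (.ofList (l₁ ++ l₂))) :
    ReducedWord (.ofList l₁) := by
  rintro ⟨p, w, t, hw, he⟩
  refine h ⟨p, w, t * .ofList l₂, hw, ?_⟩
  rw [FreeMonoid.ofList_append, he]
  simp [mul_assoc]

theorem pushAll_nil_of_reduced {l : List Gen} (h : ReducedWord (.ofList l)) :
    pushAll [] l = l.reverse := by
  induction l using List.reverseRecOn with
  | nil => rfl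
  | append_singleton l g ih =>
    rw [pushAll_append, ih h.of_append]
    show reduceTop (g :: l.reverse) = _
    rw [List.reverse_concat]
    exact reduceTop_eq_self_of_reduced (by simpa using h)

theorem isPrefixOrForksAt_push {s S : List Gen} (h : IsPrefixOrForksAt .b s S.reverse)
    (g : Gen) : IsPrefixOrForksAt .b s (push S g).reverse := by
  have h' : IsPrefixOrForksAt .b s (g :: S).reverse := by simpa using h.append [g]
  rcases reduceTop_eq_self_or_forks (g :: S) with he | ⟨Z, Z', T, g', hg', hL, hR⟩
  · rwa [push, he]
  · rw [hL, List.reverse_append, List.reverse_cons, List.append_assoc, List.singleton_append]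
      at h'
    rw [push, hR]
    simpa using h'.replace (Z' := Z'.reverse) hg'

theorem isPrefixOrForksAt_pushAll {s S : List Gen} (h : IsPrefixOrForksAt .b s S.reverse)
    (t : List Gen) : IsPrefixOrForksAt .b s (pushAll S t).reverse := by
  induction t generalizing S with
  | nil => exact h
  | cons g t ih => exact ih (isPrefixOrForksAt_push h g)

theorem isPrefixOrForksAt_of_qR_dvd {s W : List Gen} (hs : ReducedWord (.ofList s))
    (hW : ReducedWord (.ofList W)) (h : qR (.ofList s) ∣ qR (.ofList W)) :
    IsPrefixOrForksAt .b s W := by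
  obtain ⟨r, hr⟩ := h
  obtain ⟨t, rfl⟩ := Con.mk'_surjective (c := conGen RRel) r
  have hpush := pushAll_eq_of_qR_eq (hr.trans (map_mul qR _ t).symm) []
  rw [FreeMonoid.toList_mul, pushAll_append, FreeMonoid.toList_ofList, FreeMonoid.toList_ofList,
    pushAll_nil_of_reduced hW, pushAll_nil_of_reduced hs] at hpush
  have h := isPrefixOrForksAt_pushAll (S := s.reverse) (by simpa using IsPrefixOrForksAt.refl s)
    t.toList
  rwa [← hpush, List.reverse_reverse] at h

theorem qR_not_dvd_prefixWord {u : ℕ → Gen} (hu : ∀ n, ReducedWord (prefixWord u n)) {k : ℕ}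
    {γ : Gen} (hs : ReducedWord (.ofList ((List.range k).map u ++ [γ]))) (hγ : γ ≠ u k)
    (hb : u k ≠ .b) (n : ℕ) :
    ¬ qR (.ofList ((List.range k).map u ++ [γ])) ∣ qR (prefixWord u n) :=
  fun h => not_isPrefixOrForksAt (V := (List.range (max (k + 1) n)).map u)
    (by simpa [List.range_succ] using map_range_prefix u (le_max_left (k + 1) n))
    (map_range_prefix u (le_max_right _ _)) hγ hb (isPrefixOrForksAt_of_qR_dvd hs (hu n) h)

theorem exists_isConstructible_separating {u u' : ℕ → Gen} {k : ℕ}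
    (hagree : ∀ i < k, u i = u' i) (hne : u' k ≠ u k) (hb : u k ≠ .b)
    (hu : ∀ n, ReducedWord (prefixWord u n)) (hu' : ∀ n, ReducedWord (prefixWord u' n)) :
    ∃ A : Set R, IsConstructible A ∧ (∃ n : ℕ, 1 ≤ n ∧ qR (prefixWord u' n) ∈ A) ∧
      ¬ ∃ n : ℕ, 1 ≤ n ∧ qR (prefixWord u n) ∈ A := by
  have hpre : prefixWord u' (k + 1) = .ofList ((List.range k).map u ++ [u' k]) := by
    rw [prefixWord, List.range_succ, List.map_append, List.map_singleton,
      List.map_congr_left fun i hi => (hagree i (List.mem_range.1 hi)).symm]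
  refine ⟨{t | qR (prefixWord u' (k + 1)) ∣ t}, isConstructible_setOf_dvd _,
    ⟨k + 1, by omega, dvd_rfl⟩, fun ⟨n, _, hn⟩ => ?_⟩
  rw [hpre] at hn
  exact qR_not_dvd_prefixWord hu (hpre ▸ hu' (k + 1)) hne hb n hn

/-- Distinct reduced infinite words in the generators of `R` give
rise to distinct characters: there is a constructible right ideal `A ∈ J(R)` containing
some nonempty prefix product of exactly one of the two words. -/
theorem cstar_stmt14 (w v : ℕ → Gen) (hwv : w ≠ v)
    (hw : ∀ n, ReducedWord (prefixWord w n))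
    (hv : ∀ n, ReducedWord (prefixWord v n)) :
    ∃ A : Set R, IsConstructible A ∧
      Xor' (∃ n : ℕ, 1 ≤ n ∧ qR (prefixWord w n) ∈ A)
           (∃ n : ℕ, 1 ≤ n ∧ qR (prefixWord v n) ∈ A) := by
  have hex : ∃ k, w k ≠ v k := by
    by_contra! h
    exact hwv (funext h)
  have hagree : ∀ i < Nat.find hex, w i = v i := fun i hi => not_not.1 (Nat.find_min hex hi)
  have hk : w (Nat.find hex) ≠ v (Nat.find hex) := Nat.find_spec hex
  by_cases hvb : v (Nat.find hex) = .b
  · obtain ⟨A, hA, hvA, hwA⟩ :=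
      exists_isConstructible_separating hagree hk.symm (hvb ▸ hk) hw hv
    exact ⟨A, hA, Or.inr ⟨hvA, hwA⟩⟩
  · obtain ⟨A, hA, hwA, hvA⟩ :=
      exists_isConstructible_separating (fun i hi => (hagree i hi).symm) hk hvb hv hw
    exact ⟨A, hA, Or.inl ⟨hwA, hvA⟩⟩

end SgC
end
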